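/- Let q > 0, q ≠ 1, p ∈ ℕ, and n ≥ 2. Consider the Holstein-Primakoff operators for U_q[sl(3)] (n = 2) on F(2): E₁|l₁,l₂⟩ = √([l₁][p-l₁-l₂+1])|l₁-1,l₂⟩, E₂|l₁,l₂⟩ = √([l₁+1][l₂])|l₁+1,l₂-1⟩. Then the quantum Serre relation holds: E₁²E₂ - (q + q^{-1}) E₁E₂E₁ + E₂E₁² = 0, i.e. [E₁, [E₁, E₂]_q]_{q^{-1}} = 0 as operators on F(2). -/

import Mathlib

/-!
On `|k + 1, m + 1⟩` all three terms of the Serre relation land on `|k, m⟩`. Splitting off the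
factors `√[k + 2]`, `√[k + 1]`, `√[k]` from the square roots, the three coefficients become
`[k + 2] R`, `[k + 1] R` and `[k] R` for a common factor `R`, so the relation reduces to the
recurrence `[x + 1] + [x - 1] = (q + q⁻¹) [x]` at `x = k + 1`. On the other basis vectors every
term passes through `E₁|0, l⟩ = 0` or `E₂|l, 0⟩ = 0`.
-/

open Finsupp

noncomputable def qb (q x : ℝ) : ℝ := (q ^ x - q ^ (-x)) / (q - q⁻¹)

@[simp] lemma qb_zero (q : ℝ) : qb q 0 = 0 := by simp [qb]

lemma qb_nonneg {q : ℝ} (hq : 0 < q) {x : ℝ} (hx : 0 ≤ x) : 0 ≤ qb q x := by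
  rcases lt_trichotomy q 1 with h | rfl | h
  · refine div_nonneg_of_nonpos ?_ (sub_nonpos.2 (h.trans ((one_lt_inv₀ hq).2 h)).le)
    linarith [Real.rpow_le_rpow_of_exponent_ge hq h.le (neg_le_self hx)]
  · simp [qb]
  · refine div_nonneg ?_ (sub_nonneg.2 (inv_le_one_of_one_le₀ h.le |>.trans h.le))
    linarith [Real.rpow_le_rpow_of_exponent_le h.le (neg_le_self hx)]

lemma qb_add_one_add_qb_sub_one {q : ℝ} (hq : 0 < q) (x : ℝ) :
    qb q (x + 1) + qb q (x - 1) = (q + q⁻¹) * qb q x := by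
  have hq0 := hq.ne'
  rw [qb, qb, qb, show -(x + 1) = -x - 1 by ring, show -(x - 1) = -x + 1 by ring]
  simp only [Real.rpow_add_one hq0, Real.rpow_sub_one hq0]
  field_simp
  ring

/-- `hpCoeff₁ q P l₁ l₂` and `hpCoeff₂ q l₁ l₂` are the matrix coefficients of `E₁` on
`|l₁ + 1, l₂⟩` and of `E₂` on `|l₁, l₂ + 1⟩`. -/
noncomputable def hpCoeff₁ (q P a b : ℝ) : ℝ := √(qb q (a + 1) * qb q (P - (a + 1) - b + 1))

noncomputable def hpCoeff₂ (q a b : ℝ) : ℝ := √(qb q (a + 1) * qb q (b + 1))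

@[simp] lemma hpCoeff₂_neg_one (q b : ℝ) : hpCoeff₂ q (-1) b = 0 := by simp [hpCoeff₂]

lemma hpCoeff_serre {q : ℝ} (hq : 0 < q) (P K M : ℝ) (hK : 0 ≤ K) :
    hpCoeff₁ q P K M * hpCoeff₁ q P (K + 1) M * hpCoeff₂ q (K + 1) M
      - (q + q⁻¹) * (hpCoeff₁ q P K M * hpCoeff₂ q K M * hpCoeff₁ q P K (M + 1))
      + hpCoeff₂ q (K - 1) M * hpCoeff₁ q P (K - 1) (M + 1) * hpCoeff₁ q P K (M + 1) = 0 := by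
  set s : ℝ → ℝ := fun x => √(qb q x)
  -- `Real.sqrt_mul` needs only the first factor nonnegative: no sign condition on `P - K - M - 1`.
  have split {a b : ℝ} (ha : 0 ≤ a) : √(qb q a * qb q b) = s a * s b :=
    Real.sqrt_mul (qb_nonneg hq ha) _
  have sq {x : ℝ} (hx : 0 ≤ x) : s x ^ 2 = qb q x := Real.sq_sqrt (qb_nonneg hq hx)
  have recurrence : qb q (K + 2) - (q + q⁻¹) * qb q (K + 1) + qb q K = 0 := by
    have := qb_add_one_add_qb_sub_one hq (K + 1)
    rw [show K + 1 + 1 = K + 2 by ring, add_sub_cancel_right] at this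
    linarith
  simp only [hpCoeff₁, hpCoeff₂, sub_add_cancel, split hK, split (by linarith : 0 ≤ K + 1),
    split (by linarith : 0 ≤ K + 1 + 1)]
  linear_combination (norm := ring_nf)
    (s (K + 1) * s (M + 1) * s (P - K - M) * s (P - K - M - 1)) *
    (recurrence + sq (by linarith : 0 ≤ K + 2) + sq hK - (q + q⁻¹) * sq (by linarith : 0 ≤ K + 1))

theorem holstein_primakoff_sl3_serre_relation_general (q : ℝ) (p : ℕ) (hq : 0 < q)
    (E1 E2 : ((ℕ × ℕ) →₀ ℂ) →ₗ[ℂ] ((ℕ × ℕ) →₀ ℂ))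
    (hE10 : ∀ l2 : ℕ, E1 (single (0, l2) 1) = 0)
    (hE1 : ∀ l1 l2 : ℕ, E1 (single (l1 + 1, l2) 1) =
      ((Real.sqrt (qb q ((l1 : ℝ) + 1) *
          qb q ((p : ℝ) - ((l1 : ℝ) + 1) - (l2 : ℝ) + 1)) : ℝ) : ℂ) • single (l1, l2) 1)
    (hE20 : ∀ l1 : ℕ, E2 (single (l1, 0) 1) = 0)
    (hE2 : ∀ l1 l2 : ℕ, E2 (single (l1, l2 + 1) 1) =
      ((Real.sqrt (qb q ((l1 : ℝ) + 1) * qb q ((l2 : ℝ) + 1)) : ℝ) : ℂ) •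
        single (l1 + 1, l2) 1) :
    E1 ∘ₗ E1 ∘ₗ E2 - ((q + q⁻¹ : ℝ) : ℂ) • (E1 ∘ₗ E2 ∘ₗ E1) + E2 ∘ₗ E1 ∘ₗ E1 = 0 := by
  change ∀ l1 l2 : ℕ, E1 _ = ((hpCoeff₁ q p l1 l2 : ℝ) : ℂ) • _ at hE1
  change ∀ l1 l2 : ℕ, E2 _ = ((hpCoeff₂ q l1 l2 : ℝ) : ℂ) • _ at hE2
  refine Finsupp.basisSingleOne.ext fun ⟨a, b⟩ => ?_
  simp only [coe_basisSingleOne, LinearMap.add_apply, LinearMap.sub_apply, LinearMap.smul_apply,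
    LinearMap.comp_apply, LinearMap.zero_apply]
  rcases b with _ | m
  · rcases a with _ | _ | k <;>
      simp only [hE10, hE1, hE20, map_smul, map_zero, smul_zero, add_zero, sub_zero]
  rcases a with _ | _ | k
  · simp only [hE10, hE1, hE2, map_smul, map_zero, smul_zero, add_zero, sub_zero]
  · simp only [hE10, hE1, hE2, map_smul, smul_smul, smul_zero, map_zero, add_zero, ← sub_smul]
    refine smul_eq_zero_of_left ?_ _
    have h := hpCoeff_serre hq p 0 m le_rfl
    rw [zero_sub, hpCoeff₂_neg_one] at h
    norm_cast
    push_cast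
    linear_combination (norm := ring_nf) h
  · simp only [hE1, hE2, map_smul, smul_smul, ← sub_smul, ← add_smul]
    refine smul_eq_zero_of_left ?_ _
    have h := hpCoeff_serre hq p (k + 1) m (by positivity)
    rw [add_sub_cancel_right] at h
    norm_cast
    push_cast
    linear_combination (norm := ring_nf) h

theorem holstein_primakoff_sl3_serre_relation (q : ℝ) (p : ℕ) (hq : 0 < q) (hq1 : q ≠ 1)
    (E1 E2 : ((ℕ × ℕ) →₀ ℂ) →ₗ[ℂ] ((ℕ × ℕ) →₀ ℂ))
    (hE10 : ∀ l2 : ℕ, E1 (single (0, l2) 1) = 0)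
    (hE1 : ∀ l1 l2 : ℕ, E1 (single (l1 + 1, l2) 1) =
      ((Real.sqrt (qb q ((l1 : ℝ) + 1) *
          qb q ((p : ℝ) - ((l1 : ℝ) + 1) - (l2 : ℝ) + 1)) : ℝ) : ℂ) • single (l1, l2) 1)
    (hE20 : ∀ l1 : ℕ, E2 (single (l1, 0) 1) = 0)
    (hE2 : ∀ l1 l2 : ℕ, E2 (single (l1, l2 + 1) 1) =
      ((Real.sqrt (qb q ((l1 : ℝ) + 1) * qb q ((l2 : ℝ) + 1)) : ℝ) : ℂ) •
        single (l1 + 1, l2) 1) :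
    E1 ∘ₗ E1 ∘ₗ E2 - ((q + q⁻¹ : ℝ) : ℂ) • (E1 ∘ₗ E2 ∘ₗ E1) + E2 ∘ₗ E1 ∘ₗ E1 = 0 :=
  holstein_primakoff_sl3_serre_relation_general q p hq E1 E2 hE10 hE1 hE20 hE2
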